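/- If φ: G → B is a node-surjective fibration where B is strongly connected and nonnegative, then the lifting e^φ of the Perron (dominant) left eigenvector e of B is the Perron left eigenvector of G, and G and B have the same spectral radius. -/

import Mathlib

/-! Lifting along a fibration intertwines the adjacency matrices, `e^φ G = (e B)^φ`, because the
arcs into a node `y` of `G` correspond bijectively to the arcs into `φ y` in `B`. Hence `e^φ` is a
strictly positive left eigenvector of `G` for `ρ(B)`. For a nonnegative matrix `M`, a strictly
positive left eigenvector `v` with eigenvalue `λ` pins down the spectral radius: `λ` is an
eigenvalue, and if `M w = μ w` with `w ≠ 0` then `|μ| (v ⬝ |w|) ≤ v ⬝ (M |w|) = λ (v ⬝ |w|)`, so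
`|μ| ≤ λ`. -/

/-- A directed multigraph: a set of nodes, a set of arcs, and source/target maps. -/
structure Multigraph (N A : Type*) where
  src : A → N
  tgt : A → N

/-- The adjacency matrix of a multigraph (over `ℝ`): entry `(x, y)` counts the arcs
from `x` to `y` with multiplicity. -/
noncomputable def adjMat {N A : Type*} [Fintype A] [DecidableEq N]
    (G : Multigraph N A) : Matrix N N ℝ :=
  fun x y => ((Finset.univ.filter fun a => G.src a = x ∧ G.tgt a = y).card : ℝ)

/-- A graph fibration `φ : G → B`: a morphism of multigraphs (commuting with source
and target maps) such that every arc of `B` lifts uniquely at each node of `G` in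
the fiber over its target. -/
structure Fibration {N A N' A' : Type*} (G : Multigraph N A) (B : Multigraph N' A') where
  nodeMap : N → N'
  arcMap : A → A'
  src_comm : ∀ a : A, B.src (arcMap a) = nodeMap (G.src a)
  tgt_comm : ∀ a : A, B.tgt (arcMap a) = nodeMap (G.tgt a)
  lift : ∀ (a : A') (x : N), nodeMap x = B.tgt a →
    ∃! (la : A), arcMap la = a ∧ G.tgt la = x

/-- The spectral radius of a real square matrix: the supremum of the absolute values
of its (complex) eigenvalues. -/
noncomputable def specRad {n : Type*} [Fintype n] [DecidableEq n]
    (M : Matrix n n ℝ) : ℝ :=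
  sSup ((fun z : ℂ => ‖z‖) '' spectrum ℂ (M.map (algebraMap ℝ ℂ)))

namespace Matrix

variable {n K : Type*} [Fintype n] [DecidableEq n] [Field K]

theorem mem_spectrum_iff_det_sub_eq_zero {A : Matrix n n K} {r : K} :
    r ∈ spectrum K A ↔ (r • 1 - A).det = 0 := by
  rw [spectrum.mem_iff, Algebra.algebraMap_eq_smul_one, isUnit_iff_isUnit_det, isUnit_iff_ne_zero,
    not_not]

theorem mem_spectrum_iff_exists_vecMul_eq_smul {A : Matrix n n K} {r : K} :
    r ∈ spectrum K A ↔ ∃ v ≠ 0, v ᵥ* A = r • v := by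
  rw [mem_spectrum_iff_det_sub_eq_zero, ← exists_vecMul_eq_zero_iff]
  simp only [vecMul_sub, vecMul_smul, vecMul_one, sub_eq_zero, eq_comm (a := r • _)]

theorem mem_spectrum_iff_exists_mulVec_eq_smul {A : Matrix n n K} {r : K} :
    r ∈ spectrum K A ↔ ∃ v ≠ 0, A *ᵥ v = r • v := by
  rw [mem_spectrum_iff_det_sub_eq_zero, ← exists_mulVec_eq_zero_iff]
  simp only [sub_mulVec, smul_mulVec, one_mulVec, sub_eq_zero, eq_comm (a := r • _)]

theorem map_mem_spectrum_map {L : Type*} [Field L] (f : K →+* L) {A : Matrix n n K} {r : K}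
    (h : r ∈ spectrum K A) : f r ∈ spectrum L (A.map f) := by
  rw [mem_spectrum_iff_det_sub_eq_zero] at h ⊢
  have hmap : f r • 1 - A.map f = f.mapMatrix (r • 1 - A) := by
    ext i j
    by_cases hij : i = j <;> simp [hij]
  rw [hmap, ← RingHom.map_det, h, map_zero]

end Matrix

open Matrix

section NonnegMatrix

variable {n : Type*} [Fintype n] {M : Matrix n n ℝ}

theorem norm_mulVec_map_le (hM : ∀ i j, 0 ≤ M i j) (w : n → ℂ) (i : n) :
    ‖(M.map (algebraMap ℝ ℂ) *ᵥ w) i‖ ≤ (M *ᵥ fun j => ‖w j‖) i := by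
  simp only [mulVec, dotProduct]
  refine (norm_sum_le _ _).trans_eq (Finset.sum_congr rfl fun j _ => ?_)
  rw [norm_mul, map_apply, Complex.coe_algebraMap, Complex.norm_real, Real.norm_of_nonneg (hM i j)]

theorem norm_le_of_mem_spectrum_of_vecMul_eq_smul [DecidableEq n] (hM : ∀ i j, 0 ≤ M i j)
    {v : n → ℝ} (hv : ∀ i, 0 < v i) {lam : ℝ} (h : v ᵥ* M = lam • v) {μ : ℂ}
    (hμ : μ ∈ spectrum ℂ (M.map (algebraMap ℝ ℂ))) : ‖μ‖ ≤ lam := by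
  obtain ⟨w, hw0, hw⟩ := mem_spectrum_iff_exists_mulVec_eq_smul.mp hμ
  set u : n → ℝ := fun j => ‖w j‖
  have hu : ‖μ‖ • u ≤ M *ᵥ u := fun i => by
    have := norm_mulVec_map_le hM w i
    rwa [hw, Pi.smul_apply, smul_eq_mul, norm_mul] at this
  have hvu : 0 < v ⬝ᵥ u := by
    obtain ⟨j, hj⟩ := Function.ne_iff.mp hw0
    exact Finset.sum_pos' (fun i _ => mul_nonneg (hv i).le (norm_nonneg _))
      ⟨j, Finset.mem_univ _, mul_pos (hv j) (norm_pos_iff.mpr hj)⟩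
  refine le_of_mul_le_mul_right ?_ hvu
  calc ‖μ‖ * (v ⬝ᵥ u) = v ⬝ᵥ (‖μ‖ • u) := by rw [dotProduct_smul, smul_eq_mul]
    _ ≤ v ⬝ᵥ (M *ᵥ u) := dotProduct_le_dotProduct_of_nonneg_left hu fun i => (hv i).le
    _ = lam * (v ⬝ᵥ u) := by rw [dotProduct_mulVec, h, smul_dotProduct, smul_eq_mul]

theorem specRad_eq_of_vecMul_eq_smul [DecidableEq n] [Nonempty n] (hM : ∀ i j, 0 ≤ M i j)
    {v : n → ℝ} (hv : ∀ i, 0 < v i) {lam : ℝ} (h : v ᵥ* M = lam • v) : specRad M = lam := by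
  have hv0 : v ≠ 0 := fun h0 => (hv (Classical.arbitrary n)).ne' (congrFun h0 _)
  have hlam : (lam : ℂ) ∈ spectrum ℂ (M.map (algebraMap ℝ ℂ)) :=
    map_mem_spectrum_map (algebraMap ℝ ℂ) (mem_spectrum_iff_exists_vecMul_eq_smul.mpr ⟨v, hv0, h⟩)
  have hbound : ∀ μ ∈ spectrum ℂ (M.map (algebraMap ℝ ℂ)), ‖μ‖ ≤ lam :=
    fun _ => norm_le_of_mem_spectrum_of_vecMul_eq_smul hM hv h
  have hnorm : ‖(lam : ℂ)‖ = lam := by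
    have := hbound _ hlam
    rw [Complex.norm_real, Real.norm_eq_abs] at this ⊢
    exact abs_eq_self.mpr ((abs_nonneg _).trans this)
  exact IsGreatest.csSup_eq ⟨⟨_, hlam, hnorm⟩, by rintro _ ⟨μ, hμ, rfl⟩; exact hbound μ hμ⟩

end NonnegMatrix

theorem specRad_of_isEmpty {n : Type*} [Fintype n] [DecidableEq n] [IsEmpty n]
    (M : Matrix n n ℝ) : specRad M = 0 := by
  rw [specRad, spectrum.of_subsingleton, Set.image_empty, Real.sSup_empty]

theorem adjMat_nonneg {N A : Type*} [Fintype A] [DecidableEq N] (G : Multigraph N A) (x y : N) :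
    0 ≤ adjMat G x y :=
  Nat.cast_nonneg _

theorem vecMul_adjMat_apply {N A : Type*} [Fintype N] [Fintype A] [DecidableEq N]
    (G : Multigraph N A) (v : N → ℝ) (y : N) :
    (v ᵥ* adjMat G) y = ∑ a ∈ Finset.univ.filter (G.tgt · = y), v (G.src a) := by
  simp only [vecMul, dotProduct, adjMat, Finset.card_filter, Nat.cast_sum, Nat.cast_ite,
    Nat.cast_one, Nat.cast_zero, Finset.mul_sum, mul_ite, mul_one, mul_zero]
  rw [Finset.sum_comm, Finset.sum_filter]
  refine Finset.sum_congr rfl fun a _ => ?_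
  by_cases h : G.tgt a = y <;> simp [h]

theorem Fibration.vecMul_adjMat_comp_nodeMap {N A N' A' : Type*} [Fintype N] [Fintype N']
    [Fintype A] [Fintype A'] [DecidableEq N] [DecidableEq N'] {G : Multigraph N A}
    {B : Multigraph N' A'} (φ : Fibration G B) (e : N' → ℝ) :
    (e ∘ φ.nodeMap) ᵥ* adjMat G = (e ᵥ* adjMat B) ∘ φ.nodeMap := by
  funext y
  simp only [Function.comp_apply, vecMul_adjMat_apply]
  refine Finset.sum_bij (fun a _ => φ.arcMap a) ?_ ?_ ?_ ?_
  · intro a ha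
    simp only [Finset.mem_filter, Finset.mem_univ, true_and] at ha ⊢
    rw [φ.tgt_comm, ha]
  · intro a ha b hb hab
    simp only [Finset.mem_filter, Finset.mem_univ, true_and] at ha hb
    obtain ⟨_, -, huniq⟩ := φ.lift (φ.arcMap a) y (by rw [φ.tgt_comm, ha])
    rw [huniq a ⟨rfl, ha⟩, huniq b ⟨hab.symm, hb⟩]
  · intro a' ha'
    simp only [Finset.mem_filter, Finset.mem_univ, true_and] at ha'
    obtain ⟨a, ⟨rfl, hay⟩, -⟩ := φ.lift a' y ha'.symm
    exact ⟨a, by simp [hay], rfl⟩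
  · intro a _
    simp [φ.src_comm]

theorem fibration_perron_general {N A N' A' : Type*}
    [Fintype N] [Fintype N'] [Fintype A] [Fintype A'] [DecidableEq N] [DecidableEq N']
    (G : Multigraph N A) (B : Multigraph N' A') (φ : Fibration G B)
    (hsurj : Function.Surjective φ.nodeMap)
    (e : N' → ℝ) (hpos : ∀ i, 0 < e i)
    (heig : Matrix.vecMul e (adjMat B) = specRad (adjMat B) • e) :
    specRad (adjMat G) = specRad (adjMat B) ∧
    Matrix.vecMul (e ∘ φ.nodeMap) (adjMat G) = specRad (adjMat G) • (e ∘ φ.nodeMap) ∧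
    (∀ i : N, 0 < (e ∘ φ.nodeMap) i) := by
  have hlift : (e ∘ φ.nodeMap) ᵥ* adjMat G = specRad (adjMat B) • (e ∘ φ.nodeMap) := by
    rw [φ.vecMul_adjMat_comp_nodeMap, heig, Pi.smul_comp]
  have hrad : specRad (adjMat G) = specRad (adjMat B) := by
    cases isEmpty_or_nonempty N
    · have : IsEmpty N' := hsurj.isEmpty
      rw [specRad_of_isEmpty, specRad_of_isEmpty]
    · exact specRad_eq_of_vecMul_eq_smul (adjMat_nonneg G) (fun i => hpos _) hlift
  exact ⟨hrad, hrad ▸ hlift, fun i => hpos _⟩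

/-- If `φ : G → B` is a node-surjective fibration with `B` strongly connected (all
adjacency-matrix entries are nonnegative by construction), then the lifting `e^φ`
of the Perron (dominant, strictly positive) left eigenvector `e` of `B` is a
strictly positive left eigenvector of `G` for the same eigenvalue, it is the Perron
eigenvector of `G`, and `G` and `B` have the same spectral radius. -/
theorem fibration_perron {N A N' A' : Type*}
    [Fintype N] [Fintype N'] [Fintype A] [Fintype A'] [DecidableEq N] [DecidableEq N']
    (G : Multigraph N A) (B : Multigraph N' A') (φ : Fibration G B)
    (hsurj : Function.Surjective φ.nodeMap)
    (hconn : ∀ x y : N', Relation.ReflTransGen (fun u v => 0 < adjMat B u v) x y)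
    (e : N' → ℝ) (hpos : ∀ i, 0 < e i)
    (heig : Matrix.vecMul e (adjMat B) = specRad (adjMat B) • e) :
    specRad (adjMat G) = specRad (adjMat B) ∧
    Matrix.vecMul (e ∘ φ.nodeMap) (adjMat G) = specRad (adjMat G) • (e ∘ φ.nodeMap) ∧
    (∀ i : N, 0 < (e ∘ φ.nodeMap) i) :=
  fibration_perron_general G B φ hsurj e hpos heig
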